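/- arXiv:2006.04353 — 6 statements merged into one kernel-verified Lean document; each statement's English description precedes it below -/
import Mathlib

section
/- Let (X_t)_{t∈ℕ} be as in the drift setting with deterministic initial value X_0 = x₀. Then for every t ≥ 0, E[e^{η X_t}] ≤ ρ^t e^{η x₀} + ((1 - ρ^t)/(1 - ρ)) e^{ν + η B}. -/
/-!
Write `c = e^ν - ν - 1`. Comparing power series term by term, a step `d` with `|d| ≤ ν` satisfies
`e^{ηd} ≤ 1 + ηd + η²c` for `0 ≤ η ≤ 1`. Since `e^{ηX_t}` is `F_t`-measurable, conditioning on `F_t`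
turns the drift into `E[e^{ηX_{t+1}}; X_t > B] ≤ (1 + η²c - ηα) E[e^{ηX_t}; X_t > B]`, and
`ηc ≤ α/2` makes this factor at most `ρ`. At or below `B` one step reaches at most `B + ν`, so
`e^{ηX_{t+1}} ≤ e^{ν + ηB}` there. Hence `a_{t+1} ≤ ρ a_t + e^{ν + ηB}` for `a_t = E[e^{ηX_t}]`, and
the bound is the solution of this linear recursion.
-/

open MeasureTheory Real

open Nat in
lemma Real.exp_sub_one_sub_eq_tsum (x : ℝ) :
    exp x - x - 1 = ∑' n : ℕ, x ^ (n + 2) / (n + 2)! := by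
  have h := (summable_pow_div_factorial x).sum_add_tsum_nat_add 2
  rw [← congrFun NormedSpace.exp_eq_tsum_div x, ← exp_eq_exp_ℝ] at h
  norm_num [Finset.sum_range_succ] at h
  linarith

open Nat in
lemma Real.exp_mul_le_one_add_mul_add_sq_mul {η d ν : ℝ} (hη0 : 0 ≤ η) (hη1 : η ≤ 1)
    (hd : |d| ≤ ν) : exp (η * d) ≤ 1 + η * d + η ^ 2 * (exp ν - ν - 1) := by
  suffices exp (η * d) - η * d - 1 ≤ η ^ 2 * (exp ν - ν - 1) by linarith
  rw [exp_sub_one_sub_eq_tsum, exp_sub_one_sub_eq_tsum, ← tsum_mul_left]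
  refine Summable.tsum_le_tsum (fun n => ?_) ((summable_nat_add_iff 2).mpr
    (summable_pow_div_factorial _)) (((summable_nat_add_iff 2).mpr
    (summable_pow_div_factorial ν)).mul_left _)
  rw [mul_div_assoc']
  gcongr ?_ / _
  calc (η * d) ^ (n + 2) ≤ (η * |d|) ^ (n + 2) :=
        (le_abs_self _).trans_eq (by rw [abs_pow, abs_mul, abs_of_nonneg hη0])
    _ = η ^ 2 * η ^ n * |d| ^ (n + 2) := by ring
    _ ≤ η ^ 2 * 1 * ν ^ (n + 2) := by gcongr; exact pow_le_one₀ hη0 hη1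
    _ = η ^ 2 * ν ^ (n + 2) := by ring

lemma le_pow_mul_add_geom_of_le_mul_add {a : ℕ → ℝ} {ρ K : ℝ} (hρ0 : 0 ≤ ρ) (hρ1 : ρ ≠ 1)
    (h : ∀ t, a (t + 1) ≤ ρ * a t + K) (t : ℕ) :
    a t ≤ ρ ^ t * a 0 + (1 - ρ ^ t) / (1 - ρ) * K := by
  induction t with
  | zero => simp
  | succ t ih =>
    have h1ρ : 1 - ρ ≠ 0 := sub_ne_zero.mpr hρ1.symm
    calc a (t + 1) ≤ ρ * (ρ ^ t * a 0 + (1 - ρ ^ t) / (1 - ρ) * K) + K :=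
          (h t).trans (by gcongr)
      _ = ρ ^ (t + 1) * a 0 + (1 - ρ ^ (t + 1)) / (1 - ρ) * K := by field_simp; ring

lemma Real.exp_mul_le_of_abs_sub_le {u v ν η B : ℝ} (hη0 : 0 ≤ η) (hη1 : η ≤ 1)
    (h : |v - u| ≤ ν) :
    exp (η * v) ≤ exp (ν + η * B)
      + (1 + η ^ 2 * (exp ν - ν - 1)) * (Set.Ioi B).indicator (fun x => exp (η * x)) u
      + η * ((Set.Ioi B).indicator (fun x => exp (η * x)) u * (v - u)) := by
  by_cases hu : B < u
  · rw [Set.indicator_of_mem (Set.mem_Ioi.mpr hu)]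
    calc exp (η * v) = exp (η * u) * exp (η * (v - u)) := by rw [← exp_add]; ring_nf
      _ ≤ exp (η * u) * (1 + η * (v - u) + η ^ 2 * (exp ν - ν - 1)) := by
          gcongr; exact exp_mul_le_one_add_mul_add_sq_mul hη0 hη1 h
      _ ≤ _ := by nlinarith [exp_pos (ν + η * B)]
  · simp only [Set.indicator_of_notMem (mt Set.mem_Ioi.mp hu), mul_zero, zero_mul, add_zero]
    gcongr
    nlinarith [abs_le.mp h]

section

variable {Ω : Type*} {m : MeasurableSpace Ω} {μ : Measure Ω}

lemma ae_le_add_mul_of_abs_sub_le {X : ℕ → Ω → ℝ} {ν : ℝ}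
    (hinc : ∀ t, ∀ᵐ ω ∂μ, |X (t + 1) ω - X t ω| ≤ ν) (t : ℕ) :
    ∀ᵐ ω ∂μ, X t ω ≤ X 0 ω + t * ν := by
  induction t with
  | zero => simp
  | succ t ih =>
    filter_upwards [ih, hinc t] with ω h hd
    push_cast
    linarith [(abs_le.mp hd).2]

lemma integrable_exp_mul_of_ae_le [IsFiniteMeasure μ] {f : Ω → ℝ} {η C : ℝ}
    (hf : AEStronglyMeasurable f μ) (hη : 0 ≤ η) (hfC : ∀ᵐ ω ∂μ, f ω ≤ C) :
    Integrable (fun ω => exp (η * f ω)) μ := by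
  refine .of_bound (continuous_exp.comp_aestronglyMeasurable (hf.const_mul η)) (exp (η * C)) ?_
  filter_upwards [hfC] with ω h
  rw [norm_of_nonneg (exp_pos _).le]
  gcongr

lemma integral_mul_le_of_condExp_le [IsFiniteMeasure μ] {m' : MeasurableSpace Ω} (hm : m' ≤ m)
    {Z D : Ω → ℝ} {a M : ℝ} (hZ : StronglyMeasurable[m'] Z) (hZ0 : 0 ≤ Z)
    (hZM : ∀ᵐ ω ∂μ, Z ω ≤ M) (hD : Integrable D μ)
    (hDa : ∀ᵐ ω ∂μ, 0 < Z ω → μ[D | m'] ω ≤ a) :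
    ∫ ω, Z ω * D ω ∂μ ≤ a * ∫ ω, Z ω ∂μ := by
  have hZnorm : ∀ᵐ ω ∂μ, ‖Z ω‖ ≤ M := by
    filter_upwards [hZM] with ω h
    rwa [norm_of_nonneg (hZ0 ω)]
  have hZint : Integrable Z μ :=
    .of_bound (hZ.mono hm).aestronglyMeasurable M hZnorm
  calc ∫ ω, Z ω * D ω ∂μ = ∫ ω, (μ[Z * D | m']) ω ∂μ := (integral_condExp hm).symm
    _ = ∫ ω, Z ω * (μ[D | m']) ω ∂μ :=
        integral_congr_ae (condExp_stronglyMeasurable_mul_of_bound hm hZ hD M hZnorm)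
    _ ≤ ∫ ω, a * Z ω ∂μ := by
        refine integral_mono_ae (integrable_condExp.bdd_mul
          (hZ.mono hm).aestronglyMeasurable hZnorm) (hZint.const_mul a) ?_
        filter_upwards [hDa] with ω h
        rcases (hZ0 ω).eq_or_lt with hz | hz
        · simp [← hz]
        · rw [mul_comm a]
          exact mul_le_mul_of_nonneg_left (h hz) hz.le
    _ = a * ∫ ω, Z ω ∂μ := integral_const_mul a _

lemma integral_exp_mul_le_of_abs_sub_le [IsProbabilityMeasure μ] {U V : Ω → ℝ} {C ν η B : ℝ}
    (hU : Measurable U) (hV : Measurable V) (hUC : ∀ᵐ ω ∂μ, U ω ≤ C)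
    (hinc : ∀ᵐ ω ∂μ, |V ω - U ω| ≤ ν) (hη0 : 0 ≤ η) (hη1 : η ≤ 1) :
    ∫ ω, exp (η * V ω) ∂μ ≤ exp (ν + η * B)
      + (1 + η ^ 2 * (exp ν - ν - 1)) * ∫ ω, (Set.Ioi B).indicator (fun x => exp (η * x)) (U ω) ∂μ
      + η * ∫ ω, (Set.Ioi B).indicator (fun x => exp (η * x)) (U ω) * (V ω - U ω) ∂μ := by
  set c := exp ν - ν - 1
  set K := exp (ν + η * B)
  set Z : Ω → ℝ := fun ω => (Set.Ioi B).indicator (fun x => exp (η * x)) (U ω)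
  have hZm : Measurable Z :=
    ((measurable_id.const_mul η).exp.indicator measurableSet_Ioi).comp hU
  have hZC : ∀ᵐ ω ∂μ, ‖Z ω‖ ≤ exp (η * C) := by
    filter_upwards [hUC] with ω h
    rw [norm_of_nonneg (Set.indicator_nonneg (fun _ _ => (exp_pos _).le) _)]
    exact (Set.indicator_le_self' (fun _ _ => (exp_pos _).le) _).trans (by gcongr)
  have hZint : Integrable Z μ := .of_bound hZm.aestronglyMeasurable _ hZC
  have hZDint : Integrable (fun ω => Z ω * (V ω - U ω)) μ :=
    (Integrable.of_bound (hV.sub hU).aestronglyMeasurable ν (by simpa using hinc)).bdd_mul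
      hZm.aestronglyMeasurable hZC
  have hVint : Integrable (fun ω => exp (η * V ω)) μ := by
    refine integrable_exp_mul_of_ae_le hV.aestronglyMeasurable hη0 (C := C + ν) ?_
    filter_upwards [hUC, hinc] with ω h hd
    linarith [(abs_le.mp hd).2]
  have hKZint : Integrable (fun ω => K + (1 + η ^ 2 * c) * Z ω) μ :=
    (integrable_const K).add (hZint.const_mul _)
  calc ∫ ω, exp (η * V ω) ∂μ
      ≤ ∫ ω, (K + (1 + η ^ 2 * c) * Z ω + η * (Z ω * (V ω - U ω))) ∂μ := by
        refine integral_mono_ae hVint (hKZint.add (hZDint.const_mul _)) ?_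
        filter_upwards [hinc] with ω h
        exact exp_mul_le_of_abs_sub_le hη0 hη1 h
    _ = K + (1 + η ^ 2 * c) * ∫ ω, Z ω ∂μ + η * ∫ ω, Z ω * (V ω - U ω) ∂μ := by
        rw [integral_add hKZint (hZDint.const_mul _),
          integral_add (integrable_const K) (hZint.const_mul _), integral_const_mul,
          integral_const_mul]
        simp

lemma integral_exp_mul_le_of_drift [IsProbabilityMeasure μ] {m' : MeasurableSpace Ω} (hm : m' ≤ m)
    {U V : Ω → ℝ} {C ν α B η : ℝ} (hU : Measurable[m'] U) (hV : Measurable[m] V)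
    (hUC : ∀ᵐ ω ∂μ, U ω ≤ C) (hinc : ∀ᵐ ω ∂μ, |V ω - U ω| ≤ ν)
    (hdrift : ∀ᵐ ω ∂μ, B < U ω → μ[fun ω => V ω - U ω | m'] ω ≤ -α)
    (hη0 : 0 ≤ η) (hη1 : η ≤ 1) (hηc : η * (exp ν - ν - 1) ≤ α / 2) (hρ : 0 ≤ 1 - η * α / 2) :
    ∫ ω, exp (η * V ω) ∂μ ≤ (1 - η * α / 2) * ∫ ω, exp (η * U ω) ∂μ + exp (ν + η * B) := by
  have hUm : Measurable[m] U := hU.mono hm le_rfl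
  set Z : Ω → ℝ := fun ω => (Set.Ioi B).indicator (fun x => exp (η * x)) (U ω)
  have hZ : StronglyMeasurable[m'] Z :=
    (((measurable_id.const_mul η).exp.indicator measurableSet_Ioi).comp hU).stronglyMeasurable
  have hZ0 : 0 ≤ Z := fun ω => Set.indicator_nonneg (fun _ _ => (exp_pos _).le) _
  have hZY : ∀ ω, Z ω ≤ exp (η * U ω) :=
    fun ω => Set.indicator_le_self' (fun _ _ => (exp_pos _).le) _
  have hZC : ∀ᵐ ω ∂μ, Z ω ≤ exp (η * C) := by
    filter_upwards [hUC] with ω h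
    exact (hZY ω).trans (by gcongr)
  have hsplit := integral_exp_mul_le_of_abs_sub_le (B := B) hUm hV hUC hinc hη0 hη1
  have hZD : ∫ ω, Z ω * (V ω - U ω) ∂μ ≤ -α * ∫ ω, Z ω ∂μ := by
    refine integral_mul_le_of_condExp_le hm hZ hZ0 hZC
      (.of_bound (hV.sub hUm).aestronglyMeasurable ν (by simpa using hinc)) ?_
    filter_upwards [hdrift] with ω h hz
    exact h (by_contra fun hu => hz.ne' (Set.indicator_of_notMem hu _))
  have hZU : ∫ ω, Z ω ∂μ ≤ ∫ ω, exp (η * U ω) ∂μ :=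
    integral_mono_of_nonneg (ae_of_all _ hZ0)
      (integrable_exp_mul_of_ae_le hUm.aestronglyMeasurable hη0 hUC) (ae_of_all _ hZY)
  nlinarith [integral_nonneg (μ := μ) hZ0, mul_le_mul_of_nonneg_left hZD hη0,
    mul_le_mul_of_nonneg_left hηc hη0, mul_le_mul_of_nonneg_left hZU hρ]

end

theorem stmt_0_general
    {Ω : Type*} {m : MeasurableSpace Ω} {μ : Measure Ω} [IsProbabilityMeasure μ]
    (ℱ : Filtration ℕ m)
    (X : ℕ → Ω → ℝ) (hXadapted : Adapted ℱ X)
    (x₀ ν α B η ρ : ℝ)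
    (hX0 : ∀ ω, X 0 ω = x₀)
    (hinc : ∀ t : ℕ, ∀ᵐ ω ∂μ, |X (t + 1) ω - X t ω| ≤ ν)
    (hα : 0 < α)
    (hdrift : ∀ t : ℕ, ∀ᵐ ω ∂μ,
      X t ω > B → (μ[fun ω' => X (t + 1) ω' - X t ω' | ℱ t]) ω ≤ -α)
    (hη0 : 0 < η) (hη1 : η ≤ min 1 (α / (2 * (Real.exp ν - ν - 1))))
    (hρ : ρ = 1 - η * α / 2) (hρ0 : 0 < ρ) (hρ1 : ρ < 1) :
    ∀ t : ℕ, ∫ ω, Real.exp (η * X t ω) ∂μ ≤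
      ρ ^ t * Real.exp (η * x₀) + ((1 - ρ ^ t) / (1 - ρ)) * Real.exp (ν + η * B) := by
  have hηc : η * (exp ν - ν - 1) ≤ α / 2 := by
    rcases (show 0 ≤ exp ν - ν - 1 by linarith [add_one_le_exp ν]).eq_or_lt with hc | hc
    · rw [← hc]; linarith
    · have h := hη1.trans (min_le_right _ _)
      rw [le_div_iff₀ (by positivity)] at h
      linarith
  have hstep (t : ℕ) : ∫ ω, exp (η * X (t + 1) ω) ∂μ ≤
      ρ * ∫ ω, exp (η * X t ω) ∂μ + exp (ν + η * B) := by
    subst hρ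
    refine integral_exp_mul_le_of_drift (C := x₀ + t * ν) (ℱ.le t) (hXadapted t)
      ((hXadapted (t + 1)).mono (ℱ.le _) le_rfl) ?_ (hinc t) (hdrift t) hη0.le
      (hη1.trans (min_le_left _ _)) hηc hρ0.le
    simpa [hX0] using ae_le_add_mul_of_abs_sub_le hinc t
  intro t
  simpa [hX0] using le_pow_mul_add_geom_of_le_mul_add
    (a := fun t => ∫ ω, exp (η * X t ω) ∂μ) hρ0.le hρ1.ne hstep t

/-- Hajek-type drift bound on the exponential moment of a process with bounded
increments, negative drift above level `B`, and deterministic initial value. -/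
theorem stmt_0
    {Ω : Type*} {m : MeasurableSpace Ω} {μ : Measure Ω} [IsProbabilityMeasure μ]
    (ℱ : Filtration ℕ m)
    (X : ℕ → Ω → ℝ) (hXadapted : Adapted ℱ X)
    (x₀ ν α B η ρ : ℝ)
    (hX0 : ∀ ω, X 0 ω = x₀)
    (hν : 0 < ν)
    (hinc : ∀ t : ℕ, ∀ᵐ ω ∂μ, |X (t + 1) ω - X t ω| ≤ ν)
    (hα : 0 < α) (hB : 0 < B)
    (hdrift : ∀ t : ℕ, ∀ᵐ ω ∂μ,
      X t ω > B → (μ[fun ω' => X (t + 1) ω' - X t ω' | ℱ t]) ω ≤ -α)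
    (hη0 : 0 < η) (hη1 : η ≤ min 1 (α / (2 * (Real.exp ν - ν - 1))))
    (hρ : ρ = 1 - η * α / 2) (hρ0 : 0 < ρ) (hρ1 : ρ < 1) :
    ∀ t : ℕ, ∫ ω, Real.exp (η * X t ω) ∂μ ≤
      ρ ^ t * Real.exp (η * x₀) + ((1 - ρ ^ t) / (1 - ρ)) * Real.exp (ν + η * B) :=
  stmt_0_general ℱ X hXadapted x₀ ν α B η ρ hX0 hinc hα hdrift hη0 hη1 hρ hρ0 hρ1
end

section
/- Let (X_t)_{t∈ℕ} be as in the drift setting with deterministic initial value X_0 = x₀, and for a ∈ ℝ define the hitting time T_a = inf{t ≥ 0 : X_t ≤ a}. Then for every a ≥ B and every k ≥ 0, ℙ(T_a > k) ≤ e^{η(x₀ − a)} ρ^k. -/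
/-!
Write `c = e^ν - ν - 1`. An increment `Δ` with `|Δ| ≤ ν` satisfies `e^{ηΔ} ≤ 1 + ηΔ + η²c`, so
above level `B` the drift condition gives `E[e^{η(X_{k+1} - X_k)} | F_k] ≤ 1 - ηα + η²c ≤ ρ` by the
choice of `η`. On the survival event `{T_a > k} = {X_0, …, X_k > a}`, which is `F_k`-measurable,
the weight `e^{ηX_k}` therefore loses a factor `ρ` in expectation at each step:
`E[e^{ηX_k}; T_a > k] ≤ e^{ηx₀} ρ^k`. Since `e^{ηX_k} ≥ e^{ηa}` on that event, Markov's inequality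
gives the bound.
-/

open MeasureTheory Real

namespace Real

lemma exp_mul_sub_one_sub_mul_le {η s : ℝ} (hη0 : 0 ≤ η) (hη1 : η ≤ 1) (hs : 0 ≤ s) :
    exp (η * s) - 1 - η * s ≤ η ^ 2 * (exp s - 1 - s) := by
  set g : ℝ → ℝ := fun x => η ^ 2 * (exp x - 1 - x) - (exp (η * x) - 1 - η * x)
  have hg : ∀ x, HasDerivAt g (η * (η * (exp x - 1) - (exp (η * x) - 1))) x := by
    intro x
    have hψ := ((hasDerivAt_exp x).sub_const 1).sub (hasDerivAt_id x)
    have hψη := (((hasDerivAt_exp (η * x)).comp x ((hasDerivAt_id x).const_mul η)).sub_const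
      1).sub ((hasDerivAt_id x).const_mul η)
    exact ((hψ.const_mul (η ^ 2)).sub hψη).congr_deriv (by ring)
  have hconvex (x : ℝ) : exp (η * x) ≤ 1 + η * (exp x - 1) := by
    have := convexOn_exp.2 (Set.mem_univ x) (Set.mem_univ 0) hη0 (sub_nonneg.2 hη1)
      (add_sub_cancel η 1)
    simp only [smul_eq_mul, mul_zero, add_zero, exp_zero] at this
    linarith
  have := monotone_of_hasDerivAt_nonneg hg
    (fun x => mul_nonneg hη0 (by linarith [hconvex x])) hs
  simpa [g] using this

lemma exp_neg_sub_one_add_le {t : ℝ} (ht : 0 ≤ t) : exp (-t) - 1 + t ≤ exp t - 1 - t := by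
  have := self_le_sinh_iff.2 ht
  rw [sinh_eq] at this
  linarith

lemma exp_sub_self_le_exp_sub_self {s ν : ℝ} (hs : 0 ≤ s) (hsν : s ≤ ν) :
    exp s - s ≤ exp ν - ν := by
  have : exp ν = exp s * exp (ν - s) := by rw [← exp_add, add_sub_cancel]
  nlinarith [add_one_le_exp (ν - s), one_le_exp hs]

lemma exp_mul_le_one_add_mul_add_sq_mul_s2 {η ν x : ℝ} (hη0 : 0 ≤ η) (hη1 : η ≤ 1)
    (hx : |x| ≤ ν) : exp (η * x) ≤ 1 + η * x + η ^ 2 * (exp ν - ν - 1) := by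
  have habs : exp (η * x) - 1 - η * x ≤ exp (η * |x|) - 1 - η * |x| := by
    rcases abs_cases x with ⟨h, _⟩ | ⟨h, _⟩
    · rw [h]
    · have := exp_neg_sub_one_add_le (t := η * |x|) (by positivity)
      simp only [h, mul_neg, neg_neg] at this ⊢
      linarith
  have hscale := exp_mul_sub_one_sub_mul_le hη0 hη1 (abs_nonneg x)
  have hmono := exp_sub_self_le_exp_sub_self (abs_nonneg x) hx
  nlinarith [sq_nonneg η]

end Real

lemma ENat.natCast_lt_biInf_natCast_iff {P : ℕ → Prop} {k : ℕ} :
    (k : ℕ∞) < ⨅ (t : ℕ) (_ : P t), (t : ℕ∞) ↔ ∀ t ≤ k, ¬ P t := by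
  rw [← ENat.add_one_le_iff (ENat.natCast_ne_top k)]
  simp only [le_iInf_iff]
  refine forall_congr' fun t => ?_
  rw [← not_lt, imp_not_comm]
  norm_cast
  rw [Nat.lt_add_one_iff]

section CondExp

variable {Ω : Type*} {m m0 : MeasurableSpace Ω} {μ : Measure Ω} [IsFiniteMeasure μ]

lemma integrable_exp_mul_of_abs_le {D : Ω → ℝ} {η ν : ℝ} (hD : AEStronglyMeasurable D μ)
    (hDν : ∀ᵐ ω ∂μ, |D ω| ≤ ν) (hη0 : 0 ≤ η) : Integrable (fun ω => exp (η * D ω)) μ := by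
  refine (integrable_const (exp (η * ν))).mono'
    (continuous_exp.comp_aestronglyMeasurable (hD.const_mul η)) ?_
  filter_upwards [hDν] with ω hω
  rw [norm_of_nonneg (exp_pos _).le, exp_le_exp]
  exact mul_le_mul_of_nonneg_left (abs_le.1 hω).2 hη0

lemma condExp_exp_mul_le (hm : m ≤ m0) {D : Ω → ℝ} {η ν : ℝ} (hD : AEStronglyMeasurable D μ)
    (hDν : ∀ᵐ ω ∂μ, |D ω| ≤ ν) (hη0 : 0 ≤ η) (hη1 : η ≤ 1) :
    μ[fun ω => exp (η * D ω) | m] ≤ᵐ[μ]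
      fun ω => 1 + η * μ[D | m] ω + η ^ 2 * (exp ν - ν - 1) := by
  have hDint : Integrable D μ := (integrable_const ν).mono' hD hDν
  have haff : Integrable (fun ω => η * D ω + (1 + η ^ 2 * (exp ν - ν - 1))) μ :=
    (hDint.const_mul η).add (integrable_const _)
  have hpoly := condExp_mono (m := m) (integrable_exp_mul_of_abs_le hD hDν hη0) haff
    (hDν.mono fun ω hω => (exp_mul_le_one_add_mul_add_sq_mul_s2 hη0 hη1 hω).trans_eq (by ring))
  have haffine := (η • ContinuousLinearMap.id ℝ ℝ).comp_condExp_add_const_comm hm hDint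
    (1 + η ^ 2 * (exp ν - ν - 1))
  filter_upwards [hpoly, haffine] with ω hω hω'
  simp only [smul_apply, ContinuousLinearMap.id_apply, smul_eq_mul] at hω'
  linarith

lemma integral_mul_le_of_condExp_le_s2 (hm : m ≤ m0) {Y G : Ω → ℝ} {C ρ : ℝ}
    (hY : StronglyMeasurable[m] Y) (hY0 : 0 ≤ Y) (hYC : ∀ᵐ ω ∂μ, ‖Y ω‖ ≤ C)
    (hG : Integrable G μ) (hGρ : ∀ᵐ ω ∂μ, 0 < Y ω → μ[G | m] ω ≤ ρ) :
    ∫ ω, Y ω * G ω ∂μ ≤ ρ * ∫ ω, Y ω ∂μ := by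
  have hYint : Integrable Y μ :=
    (integrable_const C).mono' (hY.mono hm).aestronglyMeasurable hYC
  have hpull : μ[Y * G | m] =ᵐ[μ] Y * μ[G | m] :=
    condExp_stronglyMeasurable_mul_of_bound hm hY hG C hYC
  calc ∫ ω, Y ω * G ω ∂μ = ∫ ω, μ[Y * G | m] ω ∂μ := (integral_condExp hm).symm
    _ = ∫ ω, Y ω * μ[G | m] ω ∂μ := integral_congr_ae hpull
    _ ≤ ∫ ω, ρ * Y ω ∂μ := by
      refine integral_mono_ae (integrable_condExp.congr hpull) (hYint.const_mul ρ) ?_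
      filter_upwards [hGρ] with ω hω
      rcases (hY0 ω).eq_or_lt with h | h
      · simp [← h]
      · rw [mul_comm ρ]
        exact mul_le_mul_of_nonneg_left (hω h) h.le
    _ = ρ * ∫ ω, Y ω ∂μ := integral_const_mul ρ _

end CondExp

section HittingTime

variable {Ω : Type*} {m : MeasurableSpace Ω} {μ : Measure Ω} {ℱ : Filtration ℕ m}
  {X : ℕ → Ω → ℝ} {a η : ℝ}

def survivalSet (X : ℕ → Ω → ℝ) (a : ℝ) (k : ℕ) : Set Ω := {ω | ∀ t ≤ k, a < X t ω}

noncomputable def survivalWeight (X : ℕ → Ω → ℝ) (a η : ℝ) (k : ℕ) : Ω → ℝ :=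
  (survivalSet X a k).indicator fun ω => exp (η * X k ω)

lemma measurableSet_survivalSet (hX : Adapted ℱ X) (k : ℕ) :
    MeasurableSet[ℱ k] (survivalSet X a k) := by
  simp only [survivalSet, Set.ofPred_forall]
  exact .iInter fun t => .iInter fun ht =>
    measurableSet_lt measurable_const ((hX t).mono (ℱ.mono ht) le_rfl)

lemma survivalSet_succ_subset (k : ℕ) : survivalSet X a (k + 1) ⊆ survivalSet X a k :=
  fun _ hω t ht => hω t (ht.trans k.le_succ)

lemma stronglyMeasurable_survivalWeight (hX : Adapted ℱ X) (k : ℕ) :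
    StronglyMeasurable[ℱ k] (survivalWeight X a η k) :=
  (continuous_exp.comp_stronglyMeasurable ((hX k).const_mul η).stronglyMeasurable).indicator
    (measurableSet_survivalSet hX k)

lemma survivalWeight_nonneg (k : ℕ) : 0 ≤ survivalWeight X a η k :=
  Set.indicator_nonneg fun _ _ => (exp_pos _).le

lemma ae_norm_survivalWeight_le {C : ℝ} (hη : 0 ≤ η) {k : ℕ} (hXk : ∀ᵐ ω ∂μ, X k ω ≤ C) :
    ∀ᵐ ω ∂μ, ‖survivalWeight X a η k ω‖ ≤ exp (η * C) := by
  filter_upwards [hXk] with ω hω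
  refine (norm_indicator_le_norm_self _ ω).trans ?_
  rw [norm_of_nonneg (exp_pos _).le, exp_le_exp]
  exact mul_le_mul_of_nonneg_left hω hη

lemma ae_forall_le_add_mul_of_abs_sub_le {x₀ ν : ℝ} (hX0 : ∀ ω, X 0 ω = x₀)
    (hinc : ∀ t, ∀ᵐ ω ∂μ, |X (t + 1) ω - X t ω| ≤ ν) :
    ∀ᵐ ω ∂μ, ∀ t : ℕ, X t ω ≤ x₀ + t * ν := by
  filter_upwards [ae_all_iff.2 hinc] with ω hω t
  induction t with
  | zero => simp [hX0]
  | succ t ih => push_cast; linarith [(abs_le.1 (hω t)).2]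

lemma integral_survivalWeight_succ_le [IsFiniteMeasure μ] (hX : Adapted ℱ X) {C ν ρ : ℝ}
    (hη : 0 ≤ η) {k : ℕ} (hXk : ∀ᵐ ω ∂μ, X k ω ≤ C)
    (hinc : ∀ᵐ ω ∂μ, |X (k + 1) ω - X k ω| ≤ ν)
    (hstep : ∀ᵐ ω ∂μ, a < X k ω → μ[fun ω => exp (η * (X (k + 1) ω - X k ω)) | ℱ k] ω ≤ ρ) :
    ∫ ω, survivalWeight X a η (k + 1) ω ∂μ ≤ ρ * ∫ ω, survivalWeight X a η k ω ∂μ := by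
  have hXm (t : ℕ) : Measurable (X t) := (hX t).mono (ℱ.le t) le_rfl
  have hD : AEStronglyMeasurable (fun ω => X (k + 1) ω - X k ω) μ :=
    ((hXm (k + 1)).sub (hXm k)).aestronglyMeasurable
  have hG := integrable_exp_mul_of_abs_le hD hinc hη
  have hW := ae_norm_survivalWeight_le (a := a) hη hXk
  have hWG : survivalWeight X a η (k + 1) ≤
      fun ω => survivalWeight X a η k ω * exp (η * (X (k + 1) ω - X k ω)) := by
    intro ω
    by_cases hω : ω ∈ survivalSet X a k
    · simp only [survivalWeight, Set.indicator_of_mem hω, ← exp_add, mul_sub, add_sub_cancel]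
      exact Set.indicator_le_self' (fun _ _ => (exp_pos _).le) ω
    · simp [survivalWeight, Set.indicator_of_notMem hω,
        Set.indicator_of_notMem fun h => hω (survivalSet_succ_subset k h)]
  calc ∫ ω, survivalWeight X a η (k + 1) ω ∂μ
      ≤ ∫ ω, survivalWeight X a η k ω * exp (η * (X (k + 1) ω - X k ω)) ∂μ :=
        integral_mono_of_nonneg (ae_of_all _ (survivalWeight_nonneg _))
          (hG.bdd_mul ((stronglyMeasurable_survivalWeight hX k).mono (ℱ.le k)).aestronglyMeasurable
            hW)
          (ae_of_all _ hWG)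
    _ ≤ ρ * ∫ ω, survivalWeight X a η k ω ∂μ :=
        integral_mul_le_of_condExp_le_s2 (ℱ.le k) (stronglyMeasurable_survivalWeight hX k)
          (survivalWeight_nonneg k) hW hG <| hstep.mono fun ω h hpos =>
            h (Set.mem_of_indicator_ne_zero hpos.ne' k le_rfl)

lemma integral_survivalWeight_le [IsProbabilityMeasure μ] (hX : Adapted ℱ X) {x₀ ν ρ : ℝ}
    (hX0 : ∀ ω, X 0 ω = x₀) (hinc : ∀ t, ∀ᵐ ω ∂μ, |X (t + 1) ω - X t ω| ≤ ν) (hη : 0 ≤ η)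
    (hρ : 0 ≤ ρ)
    (hstep : ∀ k, ∀ᵐ ω ∂μ, a < X k ω → μ[fun ω => exp (η * (X (k + 1) ω - X k ω)) | ℱ k] ω ≤ ρ)
    (k : ℕ) : ∫ ω, survivalWeight X a η k ω ∂μ ≤ exp (η * x₀) * ρ ^ k := by
  induction k with
  | zero =>
    calc ∫ ω, survivalWeight X a η 0 ω ∂μ ≤ ∫ _, exp (η * x₀) ∂μ :=
          integral_mono_of_nonneg (ae_of_all _ (survivalWeight_nonneg 0)) (integrable_const _)
            (ae_of_all _ fun ω => (Set.indicator_le_self' (fun _ _ => (exp_pos _).le) ω).trans_eq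
              (by rw [hX0]))
      _ = exp (η * x₀) * ρ ^ 0 := by simp
  | succ k ih =>
    have hXk := (ae_forall_le_add_mul_of_abs_sub_le hX0 hinc).mono fun ω h => h k
    calc ∫ ω, survivalWeight X a η (k + 1) ω ∂μ ≤ ρ * ∫ ω, survivalWeight X a η k ω ∂μ :=
          integral_survivalWeight_succ_le hX hη hXk (hinc k) (hstep k)
      _ ≤ ρ * (exp (η * x₀) * ρ ^ k) := by gcongr
      _ = exp (η * x₀) * ρ ^ (k + 1) := by ring

lemma measureReal_survivalSet_mul_exp_le [IsFiniteMeasure μ] (hX : Adapted ℱ X) {C : ℝ}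
    (hη : 0 ≤ η) {k : ℕ} (hXk : ∀ᵐ ω ∂μ, X k ω ≤ C) :
    μ.real (survivalSet X a k) * exp (η * a) ≤ ∫ ω, survivalWeight X a η k ω ∂μ := by
  have hA := ℱ.le k _ (measurableSet_survivalSet (a := a) hX k)
  rw [← smul_eq_mul, ← integral_indicator_const _ hA]
  refine integral_mono_of_nonneg (ae_of_all _ (Set.indicator_nonneg fun _ _ => (exp_pos _).le))
    ((integrable_const _).mono' ((stronglyMeasurable_survivalWeight hX k).mono
      (ℱ.le k)).aestronglyMeasurable (ae_norm_survivalWeight_le hη hXk)) (ae_of_all _ fun ω => ?_)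
  by_cases hω : ω ∈ survivalSet X a k
  · simp only [survivalWeight, Set.indicator_of_mem hω, exp_le_exp]
    exact mul_le_mul_of_nonneg_left (hω k le_rfl).le hη
  · simp [survivalWeight, Set.indicator_of_notMem hω]

end HittingTime

theorem stmt_2_general
    {Ω : Type*} {m : MeasurableSpace Ω} {μ : Measure Ω} [IsProbabilityMeasure μ]
    (ℱ : Filtration ℕ m)
    (X : ℕ → Ω → ℝ) (hXadapted : Adapted ℱ X)
    (x₀ ν α B η ρ : ℝ)
    (hX0 : ∀ ω, X 0 ω = x₀)
    (hν : 0 < ν)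
    (hinc : ∀ t : ℕ, ∀ᵐ ω ∂μ, |X (t + 1) ω - X t ω| ≤ ν)
    (hdrift : ∀ t : ℕ, ∀ᵐ ω ∂μ,
      X t ω > B → (μ[fun ω' => X (t + 1) ω' - X t ω' | ℱ t]) ω ≤ -α)
    (hη0 : 0 < η) (hη1 : η ≤ min 1 (α / (2 * (Real.exp ν - ν - 1))))
    (hρ : ρ = 1 - η * α / 2) (hρ0 : 0 < ρ)
    (a : ℝ) (ha : a ≥ B)
    (T : Ω → ℕ∞)
    (hT : ∀ ω, T ω = ⨅ (t : ℕ) (_ : X t ω ≤ a), (t : ℕ∞)) :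
    ∀ k : ℕ, (μ {ω | T ω > (k : ℕ∞)}).toReal ≤ Real.exp (η * (x₀ - a)) * ρ ^ k := by
  have hηc : η * (exp ν - ν - 1) ≤ α / 2 := by
    have hc : 0 < exp ν - ν - 1 := by linarith [add_one_lt_exp hν.ne']
    have := (le_div_iff₀ (by positivity)).1 (hη1.trans (min_le_right _ _))
    linarith
  have hstep (k : ℕ) : ∀ᵐ ω ∂μ, a < X k ω →
      μ[fun ω => exp (η * (X (k + 1) ω - X k ω)) | ℱ k] ω ≤ ρ := by
    have hXm (t : ℕ) : Measurable (X t) := (hXadapted t).mono (ℱ.le t) le_rfl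
    filter_upwards [condExp_exp_mul_le (ℱ.le k) (D := fun ω => X (k + 1) ω - X k ω)
      ((hXm (k + 1)).sub (hXm k)).aestronglyMeasurable (hinc k) hη0.le
      (hη1.trans (min_le_left _ _)), hdrift k] with ω hexp hdrift hω
    nlinarith [hdrift (ha.trans_lt hω)]
  intro k
  have hXk := (ae_forall_le_add_mul_of_abs_sub_le hX0 hinc).mono fun ω h => h k
  have hmarkov := measureReal_survivalSet_mul_exp_le hXadapted hη0.le (a := a) hXk
  have hmoment := integral_survivalWeight_le hXadapted hX0 hinc hη0.le hρ0.le hstep k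
  have hevent : {ω | T ω > (k : ℕ∞)} = survivalSet X a k := by
    ext ω
    simp [hT, ENat.natCast_lt_biInf_natCast_iff, survivalSet]
  rw [hevent, ← measureReal_def, mul_sub, exp_sub, div_mul_eq_mul_div,
    le_div_iff₀ (exp_pos _)]
  exact hmarkov.trans hmoment

/-- Hajek-type hitting-time tail bound: for a process with bounded increments,
negative drift above level `B`, and deterministic initial value `x₀`, the
hitting time `T_a = inf {t : X t ≤ a}` (with `inf ∅ = ∞`) satisfies
`ℙ(T_a > k) ≤ e^{η(x₀ − a)} ρ^k` for every `a ≥ B`. -/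
theorem stmt_2
    {Ω : Type*} {m : MeasurableSpace Ω} {μ : Measure Ω} [IsProbabilityMeasure μ]
    (ℱ : Filtration ℕ m)
    (X : ℕ → Ω → ℝ) (hXadapted : Adapted ℱ X)
    (x₀ ν α B η ρ : ℝ)
    (hX0 : ∀ ω, X 0 ω = x₀)
    (hν : 0 < ν)
    (hinc : ∀ t : ℕ, ∀ᵐ ω ∂μ, |X (t + 1) ω - X t ω| ≤ ν)
    (hα : 0 < α) (hB : 0 < B)
    (hdrift : ∀ t : ℕ, ∀ᵐ ω ∂μ,
      X t ω > B → (μ[fun ω' => X (t + 1) ω' - X t ω' | ℱ t]) ω ≤ -α)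
    (hη0 : 0 < η) (hη1 : η ≤ min 1 (α / (2 * (Real.exp ν - ν - 1))))
    (hρ : ρ = 1 - η * α / 2) (hρ0 : 0 < ρ) (hρ1 : ρ < 1)
    (a : ℝ) (ha : a ≥ B)
    (T : Ω → ℕ∞)
    (hT : ∀ ω, T ω = ⨅ (t : ℕ) (_ : X t ω ≤ a), (t : ℕ∞)) :
    ∀ k : ℕ, (μ {ω | T ω > (k : ℕ∞)}).toReal ≤ Real.exp (η * (x₀ - a)) * ρ ^ k :=
  stmt_2_general ℱ X hXadapted x₀ ν α B η ρ hX0 hν hinc hdrift hη0 hη1 hρ hρ0 a ha T hT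
end

section
/- Let Y be a real-valued random variable on a probability space with |Y| ≤ ν almost surely for some ν > 0 and E[Y] ≤ −α for some α > 0. Then for every η with 0 < η ≤ 1, E[e^{ηY}] ≤ 1 − ηα + η²(e^ν − ν − 1). -/
/-!
Comparing the exponential series term by term, `e^{ηx} - 1 - ηx ≤ η² (e^ν - 1 - ν)` whenever
`|x| ≤ ν` and `|η| ≤ 1`, since every term of order `k ≥ 2` satisfies `(ηx)^k ≤ η² ν^k`.
Integrating this pointwise bound against `μ` and using `E[Y] ≤ -α` gives the claim.
-/

open MeasureTheory Real

namespace Real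

theorem exp_sub_one_sub_eq_tsum_s5 (t : ℝ) :
    exp t - 1 - t = ∑' n : ℕ, t ^ (n + 2) / (n + 2).factorial := by
  have h := (summable_pow_div_factorial t).sum_add_tsum_nat_add 2
  rw [exp_eq_exp_ℝ, NormedSpace.exp_eq_tsum_div]
  dsimp only
  rw [← h, Finset.sum_range_succ, Finset.sum_range_one]
  norm_num
  ring

theorem exp_mul_sub_one_sub_le {x ν η : ℝ} (hx : |x| ≤ ν) (hη : |η| ≤ 1) :
    exp (η * x) - 1 - η * x ≤ η ^ 2 * (exp ν - 1 - ν) := by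
  have hterm (n : ℕ) : (η * x) ^ (n + 2) / (n + 2).factorial ≤
      η ^ 2 * (ν ^ (n + 2) / (n + 2).factorial) := by
    rw [← mul_div_assoc]
    gcongr
    calc (η * x) ^ (n + 2) ≤ |η| ^ (n + 2) * |x| ^ (n + 2) := by
          rw [← mul_pow, ← abs_mul]; exact (le_abs_self _).trans (abs_pow _ _).le
      _ ≤ |η| ^ 2 * ν ^ (n + 2) :=
          mul_le_mul (pow_le_pow_of_le_one (abs_nonneg η) hη (by omega))
            (pow_le_pow_left₀ (abs_nonneg x) hx _) (by positivity) (by positivity)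
      _ = η ^ 2 * ν ^ (n + 2) := by rw [sq_abs]
  rw [exp_sub_one_sub_eq_tsum_s5, exp_sub_one_sub_eq_tsum_s5, ← tsum_mul_left]
  exact Summable.tsum_le_tsum hterm
    ((summable_nat_add_iff 2).mpr (summable_pow_div_factorial _))
    (((summable_nat_add_iff 2).mpr (summable_pow_div_factorial ν)).mul_left _)

end Real

theorem integral_exp_mul_le {Ω : Type*} {m : MeasurableSpace Ω} {μ : Measure Ω}
    [IsProbabilityMeasure μ] {Y : Ω → ℝ} (hY : AEStronglyMeasurable Y μ) {ν η : ℝ}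
    (hbdd : ∀ᵐ ω ∂μ, |Y ω| ≤ ν) (hη : |η| ≤ 1) :
    ∫ ω, exp (η * Y ω) ∂μ ≤ 1 + η * ∫ ω, Y ω ∂μ + η ^ 2 * (exp ν - 1 - ν) := by
  have hYint : Integrable Y μ := Integrable.of_bound hY ν (by simpa using hbdd)
  have hlin : Integrable (fun ω ↦ 1 + η * Y ω) μ := (integrable_const 1).add (hYint.const_mul η)
  have hpointwise : ∀ᵐ ω ∂μ, exp (η * Y ω) ≤ 1 + η * Y ω + η ^ 2 * (exp ν - 1 - ν) := by
    filter_upwards [hbdd] with ω hω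
    linarith [exp_mul_sub_one_sub_le hω hη]
  calc ∫ ω, exp (η * Y ω) ∂μ
      ≤ ∫ ω, (1 + η * Y ω + η ^ 2 * (exp ν - 1 - ν)) ∂μ :=
        integral_mono_of_nonneg (.of_forall fun _ ↦ (exp_pos _).le)
          (hlin.add (integrable_const _)) hpointwise
    _ = 1 + η * ∫ ω, Y ω ∂μ + η ^ 2 * (exp ν - 1 - ν) := by
        rw [integral_add hlin (integrable_const _),
          integral_add (integrable_const 1) (hYint.const_mul η), integral_const_mul]
        simp

theorem stmt_5_general
    {Ω : Type*} {m : MeasurableSpace Ω} {μ : Measure Ω} [IsProbabilityMeasure μ]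
    (Y : Ω → ℝ) (hY : Measurable Y)
    (ν α η : ℝ)
    (hbdd : ∀ᵐ ω ∂μ, |Y ω| ≤ ν)
    (hmean : ∫ ω, Y ω ∂μ ≤ -α)
    (hη0 : 0 < η) (hη1 : η ≤ 1) :
    ∫ ω, Real.exp (η * Y ω) ∂μ ≤ 1 - η * α + η ^ 2 * (Real.exp ν - ν - 1) := by
  have h := integral_exp_mul_le hY.aestronglyMeasurable hbdd
    (abs_le.mpr ⟨by linarith, hη1⟩)
  linarith [mul_le_mul_of_nonneg_left hmean hη0.le]

/-- If `|Y| ≤ ν` a.s. and `E[Y] ≤ −α`, then for `0 < η ≤ 1`,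
`E[e^{ηY}] ≤ 1 − ηα + η²(e^ν − ν − 1)`. -/
theorem stmt_5
    {Ω : Type*} {m : MeasurableSpace Ω} {μ : Measure Ω} [IsProbabilityMeasure μ]
    (Y : Ω → ℝ) (hY : Measurable Y)
    (ν α η : ℝ) (hν : 0 < ν) (hα : 0 < α)
    (hbdd : ∀ᵐ ω ∂μ, |Y ω| ≤ ν)
    (hmean : ∫ ω, Y ω ∂μ ≤ -α)
    (hη0 : 0 < η) (hη1 : η ≤ 1) :
    ∫ ω, Real.exp (η * Y ω) ∂μ ≤ 1 - η * α + η ^ 2 * (Real.exp ν - ν - 1) :=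
  stmt_5_general (m := m) Y hY ν α η hbdd hmean hη0 hη1
end

section
/- Under the Boltzmann policy setting, the total variation distance between the two softmax distributions satisfies ‖P̂ − P*‖_TV ≤ (|A|²/2) · (e^{2ε/τ} − 1)/(e^{2ε/τ} + 1). -/
open Real Finset

/-!
Write `x a = exp (Q̂ a / τ)` and `y a = exp (Q* a / τ)`. Since `Q̂` and `Q*` are `ε`-close, every
cross ratio `(x a * y b) / (y a * x b)` lies in `[R⁻¹, R]` with `R = exp (2ε/τ)`, and two positive
numbers within a factor `R` of each other satisfy `|u - v| ≤ (R - 1)/(R + 1) * (u + v)`. Expanding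
`x a * ∑ y - y a * ∑ x` as a sum over `b` of such differences and summing over `a` bounds
`∑ a, |P̂ a - P* a|` by `2 (R - 1)/(R + 1)`; the factor `|A|²/2` is at least `1` once `|A| ≥ 2`,
and for `|A| = 1` both distributions are the point mass.
-/

lemma abs_sub_le_of_le_mul_of_le_mul {R u v : ℝ} (hR : 1 ≤ R) (huv : u ≤ R * v)
    (hvu : v ≤ R * u) : |u - v| ≤ (R - 1) / (R + 1) * (u + v) := by
  rw [abs_sub_le_iff, div_mul_eq_mul_div, le_div_iff₀ (by linarith), le_div_iff₀ (by linarith)]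
  constructor <;> nlinarith

section Normalize

variable {ι : Type*} [Fintype ι] {x y : ι → ℝ} {R : ℝ}

lemma abs_mul_sum_sub_mul_sum_le (hR : 1 ≤ R) (hxy : ∀ a b, x a * y b ≤ R * (y a * x b))
    (a : ι) :
    |x a * ∑ b, y b - y a * ∑ b, x b| ≤
      (R - 1) / (R + 1) * (x a * ∑ b, y b + y a * ∑ b, x b) := by
  simp only [mul_sum, ← sum_sub_distrib, ← sum_add_distrib]
  refine (abs_sum_le_sum_abs _ _).trans (sum_le_sum fun b _ => ?_)
  exact abs_sub_le_of_le_mul_of_le_mul hR (hxy a b) (by linarith [hxy b a])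

theorem sum_abs_div_sum_sub_div_sum_le [Nonempty ι] (hx : ∀ a, 0 < x a) (hy : ∀ a, 0 < y a)
    (hR : 1 ≤ R) (hxy : ∀ a b, x a * y b ≤ R * (y a * x b)) :
    ∑ a, |x a / ∑ b, x b - y a / ∑ b, y b| ≤ 2 * ((R - 1) / (R + 1)) := by
  set X := ∑ b, x b
  set Y := ∑ b, y b
  have hX : 0 < X := sum_pos (fun a _ => hx a) univ_nonempty
  have hY : 0 < Y := sum_pos (fun a _ => hy a) univ_nonempty
  have hterm (a : ι) : |x a / X - y a / Y| = |x a * Y - y a * X| / (X * Y) := by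
    rw [div_sub_div _ _ hX.ne' hY.ne', abs_div, abs_of_pos (mul_pos hX hY), mul_comm X]
  calc ∑ a, |x a / X - y a / Y| = (∑ a, |x a * Y - y a * X|) / (X * Y) := by
        rw [sum_div]; exact sum_congr rfl fun a _ => hterm a
    _ ≤ (∑ a, (R - 1) / (R + 1) * (x a * Y + y a * X)) / (X * Y) := by
        gcongr with a; exact abs_mul_sum_sub_mul_sum_le hR hxy a
    _ = 2 * ((R - 1) / (R + 1)) := by
        rw [← mul_sum, sum_add_distrib, ← sum_mul, ← sum_mul]
        field_simp
        ring

end Normalize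

lemma exp_div_mul_exp_div_le_of_abs_sub_le {ι : Type*} {τ ε : ℝ} (hτ : 0 < τ) {Q Q' : ι → ℝ}
    (hQ : ∀ a, |Q a - Q' a| ≤ ε) (a b : ι) :
    exp (Q a / τ) * exp (Q' b / τ) ≤ exp (2 * ε / τ) * (exp (Q' a / τ) * exp (Q b / τ)) := by
  have h : Q a + Q' b ≤ 2 * ε + (Q' a + Q b) := by linarith [abs_le.mp (hQ a), abs_le.mp (hQ b)]
  rw [← exp_add, ← exp_add, ← exp_add, exp_le_exp]
  simpa only [add_div] using div_le_div_of_nonneg_right h hτ.le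

/-- Total variation bound between two softmax (Boltzmann) distributions built
from `Q`-functions that are `ε`-close:
`‖P̂ − P*‖_TV ≤ (|A|²/2)·(e^{2ε/τ} − 1)/(e^{2ε/τ} + 1)`. -/
theorem stmt_7 {A : Type*} [Fintype A] [Nonempty A]
    (τ ε : ℝ) (hτ : 0 < τ) (hε : 0 ≤ ε)
    (Qh Qs : A → ℝ) (hQ : ∀ a, |Qh a - Qs a| ≤ ε)
    (Ph Ps : A → ℝ)
    (hPh : ∀ a, Ph a = Real.exp (Qh a / τ) / ∑ a', Real.exp (Qh a' / τ))
    (hPs : ∀ a, Ps a = Real.exp (Qs a / τ) / ∑ a', Real.exp (Qs a' / τ)) :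
    (1 / 2) * ∑ a, |Ph a - Ps a| ≤
      ((Fintype.card A : ℝ) ^ 2 / 2) *
        ((Real.exp (2 * ε / τ) - 1) / (Real.exp (2 * ε / τ) + 1)) := by
  have hR : 1 ≤ exp (2 * ε / τ) := one_le_exp (by positivity)
  have hc : 0 ≤ (exp (2 * ε / τ) - 1) / (exp (2 * ε / τ) + 1) :=
    div_nonneg (by linarith) (by positivity)
  rcases le_or_gt (Fintype.card A) 1 with hcard | hcard
  · have : Subsingleton A := Fintype.card_le_one_iff_subsingleton.mp hcard
    have hP (a : A) : Ph a = Ps a := by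
      rw [hPh, hPs, Fintype.sum_subsingleton _ a, Fintype.sum_subsingleton _ a,
        div_self (exp_pos _).ne', div_self (exp_pos _).ne']
    simp only [hP, sub_self, abs_zero, sum_const_zero, mul_zero]
    positivity
  · have hTV := sum_abs_div_sum_sub_div_sum_le (fun a => exp_pos (Qh a / τ))
      (fun a => exp_pos (Qs a / τ)) hR (exp_div_mul_exp_div_le_of_abs_sub_le hτ hQ)
    have hn : (2 : ℝ) ≤ Fintype.card A := by exact_mod_cast hcard
    have hfactor : 0 ≤ ((Fintype.card A : ℝ) ^ 2 / 2 - 1) *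
        ((exp (2 * ε / τ) - 1) / (exp (2 * ε / τ) + 1)) :=
      mul_nonneg (by nlinarith) hc
    simp only [hPh, hPs]
    linarith
end

section
/- Under the Boltzmann policy setting, for every a ∈ A the pointwise bound |P̂(a) − P*(a)| ≤ |A| · (e^{2ε/τ} − 1)/(e^{2ε/τ} + 1) holds. -/
open Real Finset

/-!
Write `c = e^{2ε/τ}`. Shifting every `Q`-value by at most `ε` changes each Boltzmann weight by a
factor at most `e^{ε/τ}` and the partition function by a factor at most `e^{ε/τ}`, so the two
distributions agree up to the factor `c` pointwise, hence on every set of actions. Two numbers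
`u, v` within a factor `c` of each other satisfy `|u - v| ≤ (c - 1)/(c + 1) · (u + v)`; applying
this to the probabilities of `{a}` and of its complement and adding gives
`|P̂(a) - P*(a)| ≤ (c - 1)/(c + 1)`, which is at most `|A|` times that.
-/

theorem abs_sub_le_div_mul_add {c u v : ℝ} (hc : 0 ≤ c) (huv : u ≤ c * v) (hvu : v ≤ c * u) :
    |u - v| ≤ (c - 1) / (c + 1) * (u + v) := by
  rw [div_mul_eq_mul_div, abs_le, neg_le, le_div_iff₀ (by linarith), le_div_iff₀ (by linarith)]
  constructor <;> linarith

theorem abs_sub_le_of_le_mul_of_sum_eq_one {ι : Type*} [Fintype ι] {P Q : ι → ℝ} {c : ℝ}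
    (hc : 0 ≤ c) (hP : ∑ j, P j = 1) (hQ : ∑ j, Q j = 1)
    (hPQ : ∀ j, P j ≤ c * Q j) (hQP : ∀ j, Q j ≤ c * P j) (i : ι) :
    |P i - Q i| ≤ (c - 1) / (c + 1) := by
  classical
  have sum_erase (R : ι → ℝ) (hR : ∑ j, R j = 1) : ∑ j ∈ univ.erase i, R j = 1 - R i := by
    rw [sum_erase_eq_sub (mem_univ i), hR]
  have sum_erase_le {R S : ι → ℝ} (hRS : ∀ j, R j ≤ c * S j) :
      ∑ j ∈ univ.erase i, R j ≤ c * ∑ j ∈ univ.erase i, S j := by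
    rw [mul_sum]
    exact sum_le_sum fun j _ => hRS j
  have h_point := abs_sub_le_div_mul_add hc (hPQ i) (hQP i)
  have h_compl := abs_sub_le_div_mul_add hc (sum_erase_le hPQ) (sum_erase_le hQP)
  rw [sum_erase P hP, sum_erase Q hQ, sub_sub_sub_cancel_left, abs_sub_comm] at h_compl
  linarith

section Softmax

variable {ι : Type*} [Fintype ι]

noncomputable def softmax (x : ι → ℝ) (i : ι) : ℝ :=
  exp (x i) / ∑ j, exp (x j)

theorem sum_softmax [Nonempty ι] (x : ι → ℝ) : ∑ i, softmax x i = 1 := by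
  simp only [softmax, ← sum_div]
  exact div_self (sum_pos (fun j _ => exp_pos (x j)) univ_nonempty).ne'

theorem softmax_le_exp_mul_softmax [Nonempty ι] {x y : ι → ℝ} {δ : ℝ}
    (hxy : ∀ i, |x i - y i| ≤ δ) (i : ι) :
    softmax x i ≤ exp (2 * δ) * softmax y i := by
  have exp_le (j : ι) (z w : ι → ℝ) (hzw : ∀ j, |z j - w j| ≤ δ) :
      exp (z j) ≤ exp δ * exp (w j) := by
    rw [← exp_add, exp_le_exp]
    linarith [(abs_le.mp (hzw j)).2]
  have hsum : ∑ j, exp (y j) ≤ exp δ * ∑ j, exp (x j) := by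
    rw [mul_sum]
    exact sum_le_sum fun j _ => exp_le j y x fun k => abs_sub_comm (x k) (y k) ▸ hxy k
  have hpos (z : ι → ℝ) : 0 < ∑ j, exp (z j) := sum_pos (fun j _ => exp_pos (z j)) univ_nonempty
  rw [softmax, softmax, mul_div_assoc', div_le_div_iff₀ (hpos x) (hpos y), two_mul, exp_add]
  calc exp (x i) * ∑ j, exp (y j)
      ≤ (exp δ * exp (y i)) * (exp δ * ∑ j, exp (x j)) :=
        mul_le_mul (exp_le i x y hxy) hsum (hpos y).le (by positivity)
    _ = exp δ * exp δ * exp (y i) * ∑ j, exp (x j) := by ring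

end Softmax

/-- Pointwise bound between two softmax (Boltzmann) distributions built from
`Q`-functions that are `ε`-close:
`|P̂(a) − P*(a)| ≤ |A|·(e^{2ε/τ} − 1)/(e^{2ε/τ} + 1)` for every action `a`. -/
theorem stmt_8 {A : Type*} [Fintype A] [Nonempty A]
    (τ ε : ℝ) (hτ : 0 < τ) (hε : 0 ≤ ε)
    (Qh Qs : A → ℝ) (hQ : ∀ a, |Qh a - Qs a| ≤ ε)
    (Ph Ps : A → ℝ)
    (hPh : ∀ a, Ph a = Real.exp (Qh a / τ) / ∑ a', Real.exp (Qh a' / τ))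
    (hPs : ∀ a, Ps a = Real.exp (Qs a / τ) / ∑ a', Real.exp (Qs a' / τ)) :
    ∀ a, |Ph a - Ps a| ≤
      (Fintype.card A : ℝ) *
        ((Real.exp (2 * ε / τ) - 1) / (Real.exp (2 * ε / τ) + 1)) := by
  intro a
  obtain rfl : Ph = softmax (fun b => Qh b / τ) := funext hPh
  obtain rfl : Ps = softmax (fun b => Qs b / τ) := funext hPs
  have hQτ : ∀ b, |Qh b / τ - Qs b / τ| ≤ ε / τ := fun b => by
    rw [← sub_div, abs_div, abs_of_pos hτ]
    gcongr
    exact hQ b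
  have hQτ' : ∀ b, |Qs b / τ - Qh b / τ| ≤ ε / τ := fun b => abs_sub_comm (Qh b / τ) _ ▸ hQτ b
  have hc : 1 ≤ exp (2 * ε / τ) := one_le_exp (by positivity)
  rw [mul_div_assoc] at hc ⊢
  calc _ ≤ (exp (2 * (ε / τ)) - 1) / (exp (2 * (ε / τ)) + 1) :=
        abs_sub_le_of_le_mul_of_sum_eq_one (exp_pos _).le (sum_softmax _) (sum_softmax _)
          (softmax_le_exp_mul_softmax hQτ) (softmax_le_exp_mul_softmax hQτ') a
    _ ≤ _ := le_mul_of_one_le_left (div_nonneg (by linarith) (by linarith))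
        (by exact_mod_cast Fintype.card_pos)
end

section
/- In the transition-kernel setting, let μ* be a probability distribution on A with drift D(μ*) ≤ −α for some α > 0. Let (Ω, F, ℙ) be a probability space and ω ↦ μ_ω a measurable map from Ω to probability distributions on A such that ℙ(‖μ_ω − μ*‖_TV ≤ κ) ≥ 1 − δ, where κ ≥ 0 and δ ∈ [0,1]. Then the expected drift satisfies E_ω[D(μ_ω)] ≤ 4ν((1 − δ)κ + δ) − α. -/
open MeasureTheory

/-!
The drift is affine in the policy, and by the bounded-increment condition each action's expected
next value `f a` lies within `ν` of `L s`. Hence `D(μ) - D(μ*) = ∑ₐ (μ a - μ* a)(f a - L s)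
≤ 2ν ‖μ - μ*‖_TV`, so `D(μ_ω) ≤ 2ν ‖μ_ω - μ*‖_TV - α`. The total variation distance is at most
`min κ 1` on the good event and at most `1` off it, so its expectation is at most `(1 - δ)κ + δ`.
-/

theorem abs_tsum_mul_sub_le_of_hasSum_one {S : Type*} {q g : S → ℝ} {c ν : ℝ}
    (hq0 : ∀ x, 0 ≤ q x) (hq1 : HasSum q 1) (hg : ∀ x, 0 < q x → |g x - c| ≤ ν) :
    |∑' x, q x * g x - c| ≤ ν := by
  have hbound : ∀ x, ‖q x * (g x - c)‖ ≤ q x * ν := by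
    intro x
    rcases (hq0 x).eq_or_lt with h | h
    · simp [← h]
    · rw [Real.norm_eq_abs, abs_mul, abs_of_pos h]
      exact mul_le_mul_of_nonneg_left (hg x h) h.le
  have hsum_norm : Summable fun x => ‖q x * (g x - c)‖ :=
    (hq1.summable.mul_right ν).of_nonneg_of_le (fun _ => norm_nonneg _) hbound
  have hsplit : ∑' x, q x * g x = ∑' x, q x * (g x - c) + c := by
    have h := hsum_norm.of_norm.hasSum.add (hq1.mul_right c)
    simp only [← mul_add, sub_add_cancel, one_mul] at h
    exact h.tsum_eq
  calc |∑' x, q x * g x - c| = ‖∑' x, q x * (g x - c)‖ := by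
        rw [hsplit, add_sub_cancel_right, Real.norm_eq_abs]
    _ ≤ ∑' x, ‖q x * (g x - c)‖ := norm_tsum_le_tsum_norm hsum_norm
    _ ≤ ∑' x, q x * ν := hsum_norm.tsum_le_tsum hbound (hq1.summable.mul_right ν)
    _ = ν := by rw [tsum_mul_right, hq1.tsum_eq, one_mul]

theorem sum_mul_sub_sum_mul_le {A : Type*} [Fintype A] {μ μ' f : A → ℝ} {c ν : ℝ}
    (hsum : ∑ a, μ a = ∑ a, μ' a) (hf : ∀ a, |f a - c| ≤ ν) :
    ∑ a, μ a * f a - ∑ a, μ' a * f a ≤ ν * ∑ a, |μ a - μ' a| := by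
  calc ∑ a, μ a * f a - ∑ a, μ' a * f a = ∑ a, (μ a - μ' a) * (f a - c) := by
        simp only [sub_mul, mul_sub, Finset.sum_sub_distrib, ← Finset.sum_mul, hsum]
        ring
    _ ≤ ∑ a, |μ a - μ' a| * ν := by
        refine Finset.sum_le_sum fun a _ => (le_abs_self _).trans ?_
        rw [abs_mul]
        exact mul_le_mul_of_nonneg_left (hf a) (abs_nonneg _)
    _ = ν * ∑ a, |μ a - μ' a| := by rw [Finset.mul_sum]; simp_rw [mul_comm]

theorem sum_abs_sub_le_two {A : Type*} [Fintype A] {μ μ' : A → ℝ}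
    (hμ0 : ∀ a, 0 ≤ μ a) (hμ'0 : ∀ a, 0 ≤ μ' a) (hμ1 : ∑ a, μ a = 1) (hμ'1 : ∑ a, μ' a = 1) :
    ∑ a, |μ a - μ' a| ≤ 2 := by
  calc ∑ a, |μ a - μ' a| ≤ ∑ a, (μ a + μ' a) := by
        refine Finset.sum_le_sum fun a _ => (abs_sub _ _).trans_eq ?_
        rw [abs_of_nonneg (hμ0 a), abs_of_nonneg (hμ'0 a)]
    _ = 2 := by rw [Finset.sum_add_distrib, hμ1, hμ'1]; norm_num

theorem integral_le_of_le_one_of_measureReal_le {Ω : Type*} {mΩ : MeasurableSpace Ω}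
    {ℙ : Measure Ω} [IsProbabilityMeasure ℙ] {X : Ω → ℝ} {κ δ : ℝ}
    (hX : Measurable X) (hX_int : Integrable X ℙ) (hX1 : ∀ ω, X ω ≤ 1) (hδ1 : δ ≤ 1)
    (hprob : 1 - δ ≤ ℙ.real {ω | X ω ≤ κ}) :
    ∫ ω, X ω ∂ℙ ≤ (1 - δ) * κ + δ := by
  set E := {ω | X ω ≤ κ}
  have hE : MeasurableSet E := measurableSet_le hX measurable_const
  set m := min κ 1
  have hbound : ∀ ω, X ω ≤ m + (1 - m) * Eᶜ.indicator (1 : Ω → ℝ) ω := by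
    intro ω
    by_cases hω : ω ∈ E
    · rw [Set.indicator_of_notMem (Set.notMem_compl_iff.2 hω), mul_zero, add_zero]
      exact le_min hω (hX1 ω)
    · simpa [hω] using hX1 ω
  have hind_int : Integrable (Eᶜ.indicator (1 : Ω → ℝ)) ℙ := (integrable_const 1).indicator hE.compl
  calc ∫ ω, X ω ∂ℙ ≤ ∫ ω, (m + (1 - m) * Eᶜ.indicator (1 : Ω → ℝ) ω) ∂ℙ :=
        integral_mono hX_int ((integrable_const m).add (hind_int.const_mul _)) hbound
    _ = m + (1 - m) * (1 - ℙ.real E) := by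
        rw [integral_add (integrable_const m) (hind_int.const_mul _), integral_const_mul,
          integral_indicator_one hE.compl, probReal_compl_eq_one_sub hE]
        simp
    _ ≤ (1 - δ) * κ + δ := by
        have hm1 : 0 ≤ 1 - m := sub_nonneg.2 (min_le_right κ 1)
        nlinarith [mul_le_mul_of_nonneg_left (by linarith : 1 - ℙ.real E ≤ δ) hm1,
          mul_le_mul_of_nonneg_right (min_le_left κ 1) (sub_nonneg.2 hδ1)]

theorem stmt_14_general {S A : Type*} [Fintype A]
    (p : S → A → S → ℝ) (s : S)
    (hp0 : ∀ a s', 0 ≤ p s a s')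
    (hp1 : ∀ a, HasSum (fun s' => p s a s') 1)
    (L : S → ℝ)
    (ν : ℝ) (hν : 0 < ν)
    (hinc : ∀ a s', 0 < p s a s' → |L s' - L s| ≤ ν)
    (μs : A → ℝ)
    (hμs0 : ∀ a, 0 ≤ μs a) (hμs1 : ∑ a, μs a = 1)
    (α : ℝ)
    (hdrift : (∑ a, μs a * (∑' s', p s a s' * L s')) - L s ≤ -α)
    {Ω : Type*} {mΩ : MeasurableSpace Ω} (ℙ : Measure Ω) [IsProbabilityMeasure ℙ]
    (pol : Ω → A → ℝ)
    (hπmeas : ∀ a, Measurable fun ω => pol ω a)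
    (hπ0 : ∀ ω a, 0 ≤ pol ω a) (hπ1 : ∀ ω, ∑ a, pol ω a = 1)
    (κ δ : ℝ) (hδ1 : δ ≤ 1)
    (hTV : 1 - δ ≤ (ℙ {ω | (1 / 2) * ∑ a, |pol ω a - μs a| ≤ κ}).toReal) :
    ∫ ω, ((∑ a, pol ω a * (∑' s', p s a s' * L s')) - L s) ∂ℙ ≤
      4 * ν * ((1 - δ) * κ + δ) - α := by
  set f : A → ℝ := fun a => ∑' s', p s a s' * L s'
  have hf : ∀ a, |f a - L s| ≤ ν := fun a =>
    abs_tsum_mul_sub_le_of_hasSum_one (hp0 a) (hp1 a) (hinc a)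
  set X : Ω → ℝ := fun ω => (1 / 2) * ∑ a, |pol ω a - μs a|
  have hX0 : ∀ ω, 0 ≤ X ω := fun ω => by positivity
  have hX1 : ∀ ω, X ω ≤ 1 := fun ω => by
    simp only [X]
    linarith [sum_abs_sub_le_two (hπ0 ω) hμs0 (hπ1 ω) hμs1]
  have hX : Measurable X := by fun_prop
  have hdrift_le : ∀ ω, ∑ a, pol ω a * f a - L s ≤ 2 * ν * X ω - α := fun ω => by
    simp only [X]
    linarith [sum_mul_sub_sum_mul_le ((hπ1 ω).trans hμs1.symm) hf]
  have hdrift_int : Integrable (fun ω => ∑ a, pol ω a * f a - L s) ℙ := by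
    refine .of_bound (by fun_prop) ν (ae_of_all _ fun ω => ?_)
    rw [Real.norm_eq_abs, ← tsum_fintype (L := .unconditional _)]
    exact abs_tsum_mul_sub_le_of_hasSum_one (hπ0 ω)
      (by simpa [hπ1 ω] using hasSum_fintype (pol ω)) fun a _ => hf a
  have hX_int : Integrable X ℙ := .of_bound hX.aestronglyMeasurable 1
    (ae_of_all _ fun ω => by rw [Real.norm_eq_abs, abs_of_nonneg (hX0 ω)]; exact hX1 ω)
  have hEX : ∫ ω, X ω ∂ℙ ≤ (1 - δ) * κ + δ :=
    integral_le_of_le_one_of_measureReal_le hX hX_int hX1 hδ1 hTV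
  calc ∫ ω, (∑ a, pol ω a * f a - L s) ∂ℙ ≤ ∫ ω, (2 * ν * X ω - α) ∂ℙ :=
        integral_mono hdrift_int ((hX_int.const_mul _).sub (integrable_const α)) hdrift_le
    _ = 2 * ν * ∫ ω, X ω ∂ℙ - α := by
        rw [integral_sub (hX_int.const_mul _) (integrable_const α), integral_const_mul]
        simp
    _ ≤ 4 * ν * ((1 - δ) * κ + δ) - α := by
        -- `0 ≤ ∫ X` makes the bound `(1 - δ) κ + δ` nonnegative, so doubling the factor is harmless.
        nlinarith [(integral_nonneg hX0 : 0 ≤ ∫ ω, X ω ∂ℙ)]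

/-- Expected drift bound under a random policy that is `κ`-close in total
variation to a drift-`(−α)` policy `μ*` with probability at least `1 − δ`:
`E_ω[D(μ_ω)] ≤ 4ν((1 − δ)κ + δ) − α`. -/
theorem stmt_14 {S A : Type*} [Countable S] [Fintype A] [Nonempty A]
    (p : S → A → S → ℝ) (s : S)
    (hp0 : ∀ a s', 0 ≤ p s a s')
    (hp1 : ∀ a, HasSum (fun s' => p s a s') 1)
    (L : S → ℝ) (hL0 : ∀ s', 0 ≤ L s')
    (ν : ℝ) (hν : 0 < ν)
    (hinc : ∀ a s', 0 < p s a s' → |L s' - L s| ≤ ν)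
    (μs : A → ℝ)
    (hμs0 : ∀ a, 0 ≤ μs a) (hμs1 : ∑ a, μs a = 1)
    (α : ℝ) (hα : 0 < α)
    (hdrift : (∑ a, μs a * (∑' s', p s a s' * L s')) - L s ≤ -α)
    {Ω : Type*} {mΩ : MeasurableSpace Ω} (ℙ : Measure Ω) [IsProbabilityMeasure ℙ]
    (pol : Ω → A → ℝ)
    (hπmeas : ∀ a, Measurable fun ω => pol ω a)
    (hπ0 : ∀ ω a, 0 ≤ pol ω a) (hπ1 : ∀ ω, ∑ a, pol ω a = 1)
    (κ δ : ℝ) (hκ : 0 ≤ κ) (hδ0 : 0 ≤ δ) (hδ1 : δ ≤ 1)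
    (hTV : 1 - δ ≤ (ℙ {ω | (1 / 2) * ∑ a, |pol ω a - μs a| ≤ κ}).toReal) :
    ∫ ω, ((∑ a, pol ω a * (∑' s', p s a s' * L s')) - L s) ∂ℙ ≤
      4 * ν * ((1 - δ) * κ + δ) - α :=
  stmt_14_general p s hp0 hp1 L ν hν hinc μs hμs0 hμs1 α hdrift (mΩ := mΩ) ℙ pol hπmeas hπ0 hπ1 κ δ
    hδ1 hTV
end
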